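/- Let S be a real M×N matrix and let R be any positive integer with R ≥ rank(S). Then ‖S‖_* = min { ½(‖U‖_F² + ‖V‖_F²) : U is a real M×R matrix, V is a real N×R matrix, and U Vᵀ = S }, and the minimum is attained; that is, the nuclear norm equals the minimal average of squared Frobenius norms of the factors over all rank-R factorizations of S, and ½(‖U‖_F² + ‖V‖_F²) ≥ ‖U Vᵀ‖_* for every such U, V. -/

import Mathlib

open Matrix BigOperators

/-- The nuclear norm of a real matrix: the sum of its singular values, i.e. the sum of
the square roots of the (nonnegative real) eigenvalues of `Aᵀ * A` (= `Aᴴ * A` over `ℝ`). -/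
noncomputable def nuclearNorm {M N : ℕ} (A : Matrix (Fin M) (Fin N) ℝ) : ℝ :=
  ∑ i, Real.sqrt ((show (Aᵀ * A).IsHermitian by
    rw [← Matrix.conjTranspose_eq_transpose_of_trivial]; exact Matrix.isHermitian_conjTranspose_mul_self A).eigenvalues i)

/-- Squared Frobenius norm: sum of squared entries. -/
noncomputable def frobSq {M N : ℕ} (A : Matrix (Fin M) (Fin N) ℝ) : ℝ :=
  ∑ m, ∑ n, (A m n) ^ 2

/-!
Take a compact SVD `S = X diag(σ) Yᵀ`, so that `‖S‖_* = ∑ σ = tr (Xᵀ S Y)`. For any factorization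
`S = U Vᵀ`, `tr (Xᵀ U Vᵀ Y) = ⟪Uᵀ X, Vᵀ Y⟫_F ≤ ½ (‖Uᵀ X‖_F² + ‖Vᵀ Y‖_F²) ≤ ½ (‖U‖_F² + ‖V‖_F²)`,
the last step being Bessel's inequality for the orthonormal columns of `X` and `Y`. Equality holds
for `U = X diag(√σ)`, `V = Y diag(√σ)`, embedded isometrically into `R ≥ rank S` columns. The compact
SVD comes from an orthonormal eigenbasis `Q` of `Sᵀ S`: the columns of `S Q` are orthogonal, with
squared norms the eigenvalues.
-/

namespace Fintype

theorem sum_subtype_eq_sum_of_ne_zero {ι M : Type*} [Fintype ι] [AddCommMonoid M]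
    {p : ι → Prop} [DecidablePred p] {f : ι → M} (hf : ∀ i, f i ≠ 0 → p i) :
    ∑ i : {i // p i}, f i = ∑ i, f i := by
  rw [← Finset.sum_subtype (Finset.univ.filter p) (by simp), Finset.sum_filter_of_ne fun i _ => hf i]

end Fintype

namespace Matrix

variable {m n ι κ : Type*} [Fintype m] [Fintype n] [Fintype ι] [Fintype κ]

theorem trace_transpose_mul_self_nonneg (A : Matrix m n ℝ) : 0 ≤ (Aᵀ * A).trace := by
  simpa only [conjTranspose_eq_transpose_of_trivial] using
    (posSemidef_conjTranspose_mul_self A).trace_nonneg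

theorem trace_transpose_mul_le (A B : Matrix m n ℝ) :
    (Aᵀ * B).trace ≤ ((Aᵀ * A).trace + (Bᵀ * B).trace) / 2 := by
  have h := trace_transpose_mul_self_nonneg (A - B)
  have hBA : (Bᵀ * A).trace = (Aᵀ * B).trace := by
    rw [← trace_transpose, transpose_mul, transpose_transpose]
  simp only [transpose_sub, Matrix.sub_mul, Matrix.mul_sub, trace_sub, hBA] at h
  linarith

omit [Fintype n] in
theorem transpose_mul_self_mul_of_transpose_mul_eq_one [DecidableEq ι] {X : Matrix m ι ℝ}
    (hX : Xᵀ * X = 1) (A : Matrix ι n ℝ) : (X * A)ᵀ * (X * A) = Aᵀ * A := by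
  rw [transpose_mul, Matrix.mul_assoc, ← Matrix.mul_assoc Xᵀ, hX, Matrix.one_mul]

theorem trace_transpose_mul_transpose_mul_le [DecidableEq ι] {X : Matrix m ι ℝ}
    (hX : Xᵀ * X = 1) (U : Matrix m n ℝ) :
    ((Xᵀ * U)ᵀ * (Xᵀ * U)).trace ≤ (Uᵀ * U).trace := by
  have h := trace_transpose_mul_self_nonneg (U - X * (Xᵀ * U))
  have hcross : Uᵀ * (X * (Xᵀ * U)) = (Xᵀ * U)ᵀ * (Xᵀ * U) := by
    rw [transpose_mul, transpose_transpose, Matrix.mul_assoc]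
  have hsq := transpose_mul_self_mul_of_transpose_mul_eq_one hX (Xᵀ * U)
  have hcross' : (X * (Xᵀ * U))ᵀ * U = (Xᵀ * U)ᵀ * (Xᵀ * U) := by
    rw [transpose_mul, Matrix.mul_assoc]
  rw [transpose_sub, Matrix.sub_mul, Matrix.mul_sub, Matrix.mul_sub, hcross, hsq, hcross'] at h
  simp only [trace_sub] at h
  linarith

theorem trace_transpose_mul_mul_le [DecidableEq ι] {X : Matrix m ι ℝ} {Y : Matrix n ι ℝ}
    (hX : Xᵀ * X = 1) (hY : Yᵀ * Y = 1) (U : Matrix m κ ℝ) (V : Matrix n κ ℝ) :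
    (Xᵀ * (U * Vᵀ) * Y).trace ≤ ((Uᵀ * U).trace + (Vᵀ * V).trace) / 2 := by
  have h : (Xᵀ * (U * Vᵀ) * Y).trace = ((Xᵀ * U)ᵀ * (Yᵀ * V)).trace := by
    rw [← trace_transpose, trace_mul_comm]
    simp only [transpose_mul, transpose_transpose, Matrix.mul_assoc]
  rw [h]
  linarith [trace_transpose_mul_le (Xᵀ * U) (Yᵀ * V),
    trace_transpose_mul_transpose_mul_le hX U, trace_transpose_mul_transpose_mul_le hY V]

theorem exists_mul_transpose_eq_one [DecidableEq ι] (h : Fintype.card ι ≤ Fintype.card κ) :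
    ∃ P : Matrix ι κ ℝ, P * Pᵀ = 1 := by
  classical
  obtain ⟨f⟩ := Function.Embedding.nonempty_of_card_le h
  refine ⟨(1 : Matrix κ κ ℝ).submatrix f id, ?_⟩
  rw [transpose_submatrix, transpose_one, ← submatrix_mul _ _ _ _ _ Function.bijective_id,
    Matrix.one_mul, submatrix_one_embedding]

theorem trace_transpose_mul_self_mul_of_mul_transpose_eq_one [DecidableEq ι] {P : Matrix ι κ ℝ}
    (hP : P * Pᵀ = 1) (A : Matrix m ι ℝ) :
    ((A * P)ᵀ * (A * P)).trace = (Aᵀ * A).trace := by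
  rw [transpose_mul, Matrix.mul_assoc, trace_mul_comm, Matrix.mul_assoc, Matrix.mul_assoc, hP,
    Matrix.mul_one]

omit [Fintype n] in
theorem eq_zero_of_transpose_mul_self_eq_diagonal {W : Matrix m n ℝ} {d : n → ℝ} [DecidableEq n]
    (hW : Wᵀ * W = diagonal d) {i : n} (hi : d i = 0) (k : m) : W k i = 0 := by
  have hcol := congr_fun (congr_fun hW i) i
  rw [mul_apply', diagonal_apply_eq, hi] at hcol
  exact congr_fun (dotProduct_self_eq_zero.mp hcol) k

structure IsCompactSVD [DecidableEq ι] (S : Matrix m n ℝ) (X : Matrix m ι ℝ) (σ : ι → ℝ)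
    (Y : Matrix n ι ℝ) : Prop where
  transpose_mul_left_eq_one : Xᵀ * X = 1
  transpose_mul_right_eq_one : Yᵀ * Y = 1
  pos : ∀ i, 0 < σ i
  eq_mul_diagonal_mul : S = X * diagonal σ * Yᵀ

theorem isCompactSVD_of_transpose_mul_self_eq_diagonal {k : Type*} [Fintype k] [DecidableEq n]
    {W : Matrix m n ℝ} {Q : Matrix k n ℝ} {d : n → ℝ} (hW : Wᵀ * W = diagonal d) (hd : 0 ≤ d)
    (hQ : Qᵀ * Q = 1) :
    IsCompactSVD (W * Qᵀ)
      ((W.submatrix id Subtype.val : Matrix m {i // d i ≠ 0} ℝ) *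
        diagonal fun i : {i // d i ≠ 0} => (√(d i))⁻¹)
      (fun i : {i // d i ≠ 0} => √(d i)) (Q.submatrix id Subtype.val) := by
  have hval : Function.Injective (Subtype.val : {i // d i ≠ 0} → n) := Subtype.val_injective
  have hsqrt : ∀ i : {i // d i ≠ 0}, 0 < √(d i) := fun i =>
    Real.sqrt_pos.mpr ((hd i).lt_of_ne (Ne.symm i.2))
  refine ⟨?_, ?_, hsqrt, ?_⟩
  · rw [transpose_mul, transpose_submatrix, Matrix.mul_assoc, ← Matrix.mul_assoc _ (W.submatrix _ _),
      ← submatrix_mul _ _ _ _ _ Function.bijective_id, hW, submatrix_diagonal _ _ hval,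
      diagonal_transpose, diagonal_mul_diagonal, diagonal_mul_diagonal]
    refine (congrArg diagonal (funext fun i => ?_)).trans diagonal_one
    have hsq := Real.mul_self_sqrt (hd i)
    have hne := (hsqrt i).ne'
    simp only [Function.comp_apply]
    field_simp
    linarith
  · rw [transpose_submatrix, ← submatrix_mul _ _ _ _ _ Function.bijective_id, hQ,
      submatrix_one _ hval]
  · have hinv : ((diagonal fun i : {i // d i ≠ 0} => (√(d i))⁻¹) *
        diagonal fun i : {i // d i ≠ 0} => √(d i)) = 1 := by
      rw [diagonal_mul_diagonal, ← diagonal_one]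
      exact congrArg diagonal (funext fun i => inv_mul_cancel₀ (hsqrt i).ne')
    rw [Matrix.mul_assoc (W.submatrix id Subtype.val), hinv, Matrix.mul_one]
    ext a b
    simp only [mul_apply, submatrix_apply, transpose_apply, id]
    refine (Fintype.sum_subtype_eq_sum_of_ne_zero fun i hi => ?_).symm
    intro hdi
    exact hi (by rw [eq_zero_of_transpose_mul_self_eq_diagonal hW hdi, zero_mul])

namespace IsCompactSVD

variable [DecidableEq ι] {S : Matrix m n ℝ} {X : Matrix m ι ℝ} {σ : ι → ℝ} {Y : Matrix n ι ℝ}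

theorem trace_transpose_mul_mul (h : IsCompactSVD S X σ Y) : (Xᵀ * S * Y).trace = ∑ i, σ i := by
  rw [h.eq_mul_diagonal_mul, ← Matrix.mul_assoc, ← Matrix.mul_assoc, h.transpose_mul_left_eq_one, Matrix.one_mul,
    Matrix.mul_assoc, h.transpose_mul_right_eq_one, Matrix.mul_one, trace_diagonal]

theorem sum_le {U : Matrix m κ ℝ} {V : Matrix n κ ℝ} (h : IsCompactSVD (U * Vᵀ) X σ Y) :
    ∑ i, σ i ≤ ((Uᵀ * U).trace + (Vᵀ * V).trace) / 2 :=
  h.trace_transpose_mul_mul ▸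
    trace_transpose_mul_mul_le h.transpose_mul_left_eq_one h.transpose_mul_right_eq_one U V

theorem exists_factorization (h : IsCompactSVD S X σ Y)
    (hcard : Fintype.card ι ≤ Fintype.card κ) :
    ∃ (U : Matrix m κ ℝ) (V : Matrix n κ ℝ),
      U * Vᵀ = S ∧ (Uᵀ * U).trace = ∑ i, σ i ∧ (Vᵀ * V).trace = ∑ i, σ i := by
  obtain ⟨P, hP⟩ := exists_mul_transpose_eq_one (κ := κ) hcard
  set D : Matrix ι ι ℝ := diagonal fun i => √(σ i) with hD_def
  have hDt : Dᵀ = D := by rw [hD_def, diagonal_transpose]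
  have hD : D * D = diagonal σ := by
    rw [diagonal_mul_diagonal]
    exact congrArg diagonal (funext fun i => Real.mul_self_sqrt (h.pos i).le)
  have hDD : (Dᵀ * D).trace = ∑ i, σ i := by rw [hDt, hD, trace_diagonal]
  refine ⟨X * D * P, Y * D * P, ?_, ?_, ?_⟩
  · rw [h.eq_mul_diagonal_mul, transpose_mul, transpose_mul, hDt]
    simp only [Matrix.mul_assoc]
    rw [← Matrix.mul_assoc P, hP, Matrix.one_mul, ← Matrix.mul_assoc D, hD]
  · rw [trace_transpose_mul_self_mul_of_mul_transpose_eq_one hP,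
      transpose_mul_self_mul_of_transpose_mul_eq_one h.transpose_mul_left_eq_one, hDD]
  · rw [trace_transpose_mul_self_mul_of_mul_transpose_eq_one hP,
      transpose_mul_self_mul_of_transpose_mul_eq_one h.transpose_mul_right_eq_one, hDD]

end IsCompactSVD

end Matrix

theorem frobSq_eq_trace {M N : ℕ} (A : Matrix (Fin M) (Fin N) ℝ) : frobSq A = (Aᵀ * A).trace := by
  rw [frobSq, Finset.sum_comm]
  simp only [trace, diag, mul_apply, transpose_apply, sq]

theorem exists_isCompactSVD_sum_eq_nuclearNorm {M N : ℕ} (S : Matrix (Fin M) (Fin N) ℝ) :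
    ∃ (ι : Type) (_ : Fintype ι) (_ : DecidableEq ι) (X : Matrix (Fin M) ι ℝ) (σ : ι → ℝ)
      (Y : Matrix (Fin N) ι ℝ),
      IsCompactSVD S X σ Y ∧ ∑ i, σ i = nuclearNorm S ∧ Fintype.card ι = S.rank := by
  have hH : (Sᵀ * S).IsHermitian := by
    simpa only [conjTranspose_eq_transpose_of_trivial] using isHermitian_conjTranspose_mul_self S
  set Q : Matrix (Fin N) (Fin N) ℝ := (hH.eigenvectorUnitary : Matrix (Fin N) (Fin N) ℝ)
  have hQ : Qᵀ * Q = 1 := by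
    simpa [star_eq_conjTranspose] using Unitary.coe_star_mul_self hH.eigenvectorUnitary
  have hW : (S * Q)ᵀ * (S * Q) = diagonal hH.eigenvalues := by
    have := hH.conjStarAlgAut_star_eigenvectorUnitary
    rw [Unitary.conjStarAlgAut_star_apply, RCLike.ofReal_real_eq_id, Function.id_comp,
      star_eq_conjTranspose, conjTranspose_eq_transpose_of_trivial] at this
    rw [transpose_mul, ← this]
    simp only [Matrix.mul_assoc]
    rfl
  have hd : 0 ≤ hH.eigenvalues := by
    have hpsd := posSemidef_conjTranspose_mul_self S
    rw [conjTranspose_eq_transpose_of_trivial] at hpsd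
    exact hpsd.eigenvalues_nonneg
  have hS : S * Q * Qᵀ = S := by rw [Matrix.mul_assoc, mul_eq_one_comm.mp hQ, Matrix.mul_one]
  refine ⟨_, _, _, _, _, _, hS ▸ isCompactSVD_of_transpose_mul_self_eq_diagonal hW hd hQ, ?_, ?_⟩
  · refine Fintype.sum_subtype_eq_sum_of_ne_zero (f := fun i => √(hH.eigenvalues i)) fun i hi h0 => ?_
    rw [h0, Real.sqrt_zero] at hi
    exact hi rfl
  · rw [← hH.rank_eq_card_non_zero_eigs, rank_transpose_mul_self]

theorem nuclearNorm_mul_transpose_le {M N R : ℕ} (U : Matrix (Fin M) (Fin R) ℝ)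
    (V : Matrix (Fin N) (Fin R) ℝ) : nuclearNorm (U * Vᵀ) ≤ (1 / 2) * (frobSq U + frobSq V) := by
  obtain ⟨ι, _, _, X, σ, Y, hSVD, hσ, -⟩ := exists_isCompactSVD_sum_eq_nuclearNorm (U * Vᵀ)
  rw [← hσ, frobSq_eq_trace, frobSq_eq_trace]
  linarith [hSVD.sum_le]

theorem exists_factorization_nuclearNorm_eq {M N R : ℕ} (S : Matrix (Fin M) (Fin N) ℝ)
    (hR : S.rank ≤ R) :
    ∃ (U : Matrix (Fin M) (Fin R) ℝ) (V : Matrix (Fin N) (Fin R) ℝ),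
      U * Vᵀ = S ∧ nuclearNorm S = (1 / 2) * (frobSq U + frobSq V) := by
  obtain ⟨ι, _, _, X, σ, Y, hSVD, hσ, hcard⟩ := exists_isCompactSVD_sum_eq_nuclearNorm S
  obtain ⟨U, V, hUV, hU, hV⟩ :=
    hSVD.exists_factorization (κ := Fin R) (by rwa [hcard, Fintype.card_fin])
  refine ⟨U, V, hUV, ?_⟩
  rw [frobSq_eq_trace, frobSq_eq_trace, hU, hV, hσ]
  ring

theorem nuclearNorm_eq_min_factorization_general
    {M N : ℕ} (S : Matrix (Fin M) (Fin N) ℝ) (R : ℕ) (hR : S.rank ≤ R) :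
    IsLeast {x : ℝ | ∃ (U : Matrix (Fin M) (Fin R) ℝ) (V : Matrix (Fin N) (Fin R) ℝ),
        U * Vᵀ = S ∧ x = (1 / 2) * (frobSq U + frobSq V)}
      (nuclearNorm S) ∧
    ∀ (U : Matrix (Fin M) (Fin R) ℝ) (V : Matrix (Fin N) (Fin R) ℝ),
      nuclearNorm (U * Vᵀ) ≤ (1 / 2) * (frobSq U + frobSq V) := by
  refine ⟨⟨exists_factorization_nuclearNorm_eq S hR, ?_⟩, nuclearNorm_mul_transpose_le⟩
  rintro x ⟨U, V, rfl, rfl⟩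
  exact nuclearNorm_mul_transpose_le U V

/-- The nuclear norm is the minimal value of `½(‖U‖_F² + ‖V‖_F²)` over all factorizations
`S = U Vᵀ` with inner dimension `R ≥ rank S`, the minimum is attained, and
`½(‖U‖_F² + ‖V‖_F²) ≥ ‖U Vᵀ‖_*` for every `U : M × R`, `V : N × R`. -/
theorem nuclearNorm_eq_min_factorization
    {M N : ℕ} (S : Matrix (Fin M) (Fin N) ℝ) (R : ℕ) (hR0 : 0 < R) (hR : S.rank ≤ R) :
    IsLeast {x : ℝ | ∃ (U : Matrix (Fin M) (Fin R) ℝ) (V : Matrix (Fin N) (Fin R) ℝ),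
        U * Vᵀ = S ∧ x = (1 / 2) * (frobSq U + frobSq V)}
      (nuclearNorm S) ∧
    ∀ (U : Matrix (Fin M) (Fin R) ℝ) (V : Matrix (Fin N) (Fin R) ℝ),
      nuclearNorm (U * Vᵀ) ≤ (1 / 2) * (frobSq U + frobSq V) :=
  nuclearNorm_eq_min_factorization_general S R hR
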